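/- arXiv:1607.04358 — 2 statements merged into one kernel-verified Lean document; each statement's English description precedes it below -/
import Mathlib

section
/- Let μX < μY be real numbers, σ > 0, and a < b real numbers. Let p_{X|a<X<b} and p_{Y|a<Y<b} denote the densities of N(μX, σ²) and N(μY, σ²) truncated to (a, b). Then p_{X|a<X<b}(a) > p_{Y|a<Y<b}(a) and p_{X|a<X<b}(b) < p_{Y|a<Y<b}(b). -/
open MeasureTheory

/-- The standard normal density `φ(x) = exp(−x²/2)/√(2π)`. -/
noncomputable def stdNormalPDF (x : ℝ) : ℝ :=
  Real.exp (-x ^ 2 / 2) / Real.sqrt (2 * Real.pi)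

/-- The standard normal cumulative distribution function `Φ(x) = ∫_{−∞}^{x} φ(t) dt`. -/
noncomputable def stdNormalCDF (x : ℝ) : ℝ :=
  ∫ t in Set.Iic x, stdNormalPDF t

/-- The density of `N(μ, σ²)` truncated to the interval `(a, b)`:
`p(x) = (1/σ)·φ((x−μ)/σ) / (Φ((b−μ)/σ) − Φ((a−μ)/σ))` for `a ≤ x ≤ b`, `0` otherwise. -/
noncomputable def truncNormalPDF (μ σ a b x : ℝ) : ℝ :=
  if a ≤ x ∧ x ≤ b then
    (1 / σ) * stdNormalPDF ((x - μ) / σ) /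
      (stdNormalCDF ((b - μ) / σ) - stdNormalCDF ((a - μ) / σ))
  else 0

lemma stdNormalPDF_pos (x : ℝ) : 0 < stdNormalPDF x := by
  unfold stdNormalPDF
  positivity

lemma stdNormalPDF_continuous : Continuous stdNormalPDF := by
  unfold stdNormalPDF
  fun_prop

lemma stdNormalPDF_integrable : Integrable stdNormalPDF := by
  have : stdNormalPDF = fun x => Real.exp (-(1/2) * x ^ 2) / Real.sqrt (2 * Real.pi) := by
    funext x; unfold stdNormalPDF; ring_nf
  rw [this]
  exact (integrable_exp_neg_mul_sq (by norm_num)).div_const _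

lemma stdNormalCDF_sub (α β : ℝ) :
    stdNormalCDF β - stdNormalCDF α = ∫ t in α..β, stdNormalPDF t := by
  unfold stdNormalCDF
  exact intervalIntegral.integral_Iic_sub_Iic stdNormalPDF_integrable.integrableOn
    stdNormalPDF_integrable.integrableOn

lemma stdNormalPDF_mul_lt {u δ t : ℝ} (hδ : 0 < δ) (ht : u < t) :
    stdNormalPDF u * stdNormalPDF (t + δ) < stdNormalPDF (u + δ) * stdNormalPDF t := by
  unfold stdNormalPDF
  have h2π : (0:ℝ) < Real.sqrt (2 * Real.pi) := Real.sqrt_pos.2 (by positivity)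
  rw [div_mul_div_comm, div_mul_div_comm, div_lt_div_iff₀ (by positivity) (by positivity)]
  rw [← Real.exp_add, ← Real.exp_add]
  have : Real.exp (-u ^ 2 / 2 + -(t + δ) ^ 2 / 2) < Real.exp (-(u + δ) ^ 2 / 2 + -t ^ 2 / 2) := by
    apply Real.exp_lt_exp.2
    nlinarith
  nlinarith [this, mul_pos h2π h2π,
    Real.exp_pos (-u ^ 2 / 2 + -(t + δ) ^ 2 / 2), Real.exp_pos (-(u + δ) ^ 2 / 2 + -t ^ 2 / 2)]

lemma key_lt {u δ c : ℝ} (hδ : 0 < δ) (hc : 0 < c) :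
    stdNormalPDF u * ∫ t in u..(u + c), stdNormalPDF (t + δ) <
      stdNormalPDF (u + δ) * ∫ t in u..(u + c), stdNormalPDF t := by
  have hint1 : IntervalIntegrable (fun t => stdNormalPDF (t + δ)) volume u (u + c) :=
    (stdNormalPDF_continuous.comp (continuous_id.add continuous_const)).intervalIntegrable _ _
  have hint2 : IntervalIntegrable stdNormalPDF volume u (u + c) :=
    stdNormalPDF_continuous.intervalIntegrable _ _
  have h := intervalIntegral.intervalIntegral_pos_of_pos_on (f := fun t =>
      stdNormalPDF (u + δ) * stdNormalPDF t - stdNormalPDF u * stdNormalPDF (t + δ))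
    ((hint2.const_mul _).sub (hint1.const_mul _))
    (fun t ht => sub_pos.2 (stdNormalPDF_mul_lt hδ ht.1)) (by linarith)
  rw [intervalIntegral.integral_sub (hint2.const_mul _) (hint1.const_mul _),
    intervalIntegral.integral_const_mul, intervalIntegral.integral_const_mul] at h
  linarith

lemma key_lt' {u δ c : ℝ} (hδ : 0 < δ) (hc : 0 < c) :
    stdNormalPDF (u + δ + c) * ∫ t in u..(u + c), stdNormalPDF t <
      stdNormalPDF (u + c) * ∫ t in u..(u + c), stdNormalPDF (t + δ) := by
  have hint1 : IntervalIntegrable (fun t => stdNormalPDF (t + δ)) volume u (u + c) :=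
    (stdNormalPDF_continuous.comp (continuous_id.add continuous_const)).intervalIntegrable _ _
  have hint2 : IntervalIntegrable stdNormalPDF volume u (u + c) :=
    stdNormalPDF_continuous.intervalIntegrable _ _
  have h := intervalIntegral.intervalIntegral_pos_of_pos_on (f := fun t =>
      stdNormalPDF (u + c) * stdNormalPDF (t + δ) - stdNormalPDF (u + δ + c) * stdNormalPDF t)
    ((hint1.const_mul _).sub (hint2.const_mul _))
    (fun t ht => by
      have h := stdNormalPDF_mul_lt (u := t) (δ := δ) (t := u + c) hδ ht.2
      rw [show u + c + δ = u + δ + c from by ring] at h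
      linarith [h, mul_comm (stdNormalPDF t) (stdNormalPDF (u + δ + c)),
        mul_comm (stdNormalPDF (t + δ)) (stdNormalPDF (u + c))]) (by linarith)
  rw [intervalIntegral.integral_sub (hint1.const_mul _) (hint2.const_mul _),
    intervalIntegral.integral_const_mul, intervalIntegral.integral_const_mul] at h
  linarith

/-- For `μX < μY`, `σ > 0` and `a < b`, the truncated density with the smaller mean is
larger at the left endpoint `a` and smaller at the right endpoint `b`. -/
theorem truncNormalPDF_endpoints
    (μX μY σ a b : ℝ) (hμ : μX < μY) (hσ : 0 < σ) (hab : a < b) :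
    truncNormalPDF μX σ a b a > truncNormalPDF μY σ a b a ∧
      truncNormalPDF μX σ a b b < truncNormalPDF μY σ a b b := by
  set u : ℝ := (a - μY) / σ with hu
  set δ : ℝ := (μY - μX) / σ with hδdef
  set c : ℝ := (b - a) / σ with hcdef
  have hδ : 0 < δ := div_pos (by linarith) hσ
  have hc : 0 < c := div_pos (by linarith) hσ
  have e1 : (a - μX) / σ = u + δ := by rw [hu, hδdef, ← add_div]; congr 1; ring
  have e2 : (b - μY) / σ = u + c := by rw [hu, hcdef, ← add_div]; congr 1; ring
  have e3 : (b - μX) / σ = u + δ + c := by rw [hu, hcdef, hδdef, ← add_div, ← add_div]; congr 1; ring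
  have hDY : stdNormalCDF ((b - μY) / σ) - stdNormalCDF ((a - μY) / σ) =
      ∫ t in u..(u + c), stdNormalPDF t := by
    rw [e2, ← hu, stdNormalCDF_sub]
  have hDX : stdNormalCDF ((b - μX) / σ) - stdNormalCDF ((a - μX) / σ) =
      ∫ t in u..(u + c), stdNormalPDF (t + δ) := by
    rw [e3, e1, stdNormalCDF_sub, intervalIntegral.integral_comp_add_right]
    congr 1 <;> ring
  have hDYpos : 0 < ∫ t in u..(u + c), stdNormalPDF t :=
    intervalIntegral.intervalIntegral_pos_of_pos
      (stdNormalPDF_continuous.intervalIntegrable _ _) (fun x => stdNormalPDF_pos x)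
      (by linarith)
  have hDXpos : 0 < ∫ t in u..(u + c), stdNormalPDF (t + δ) :=
    intervalIntegral.intervalIntegral_pos_of_pos
      ((stdNormalPDF_continuous.comp (continuous_id.add continuous_const)).intervalIntegrable _ _)
      (fun x => stdNormalPDF_pos _) (by linarith)
  have haa : a ≤ a ∧ a ≤ b := ⟨le_refl a, le_of_lt hab⟩
  have hbb : a ≤ b ∧ b ≤ b := ⟨le_of_lt hab, le_refl b⟩
  have hσ' : (0:ℝ) < 1 / σ := by positivity
  constructor
  · unfold truncNormalPDF
    rw [if_pos haa, if_pos haa, hDY, hDX, e1, ← hu, gt_iff_lt,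
      div_lt_div_iff₀ hDYpos hDXpos]
    have := key_lt (u := u) hδ hc
    nlinarith
  · unfold truncNormalPDF
    rw [if_pos hbb, if_pos hbb, hDY, hDX, e3, e2,
      div_lt_div_iff₀ hDXpos hDYpos]
    have := key_lt' (u := u) hδ hc
    nlinarith
end

section
/- Let X₁, …, Xₙ (n ≥ 2) be independent real-valued Gaussian random variables with Xᵢ ~ N(μᵢ, σ²) for a common σ > 0, and suppose μ₁ < μ₂ < … < μₙ (strictly). Then among all permutations π of {1, …, n} different from the identity, the maximum of P(X_{π(1)} < X_{π(2)} < … < X_{π(n)}) is attained by an adjacent transposition, i.e., by a permutation π that swaps some pair k, k+1 and fixes all other indices. That is, the second most likely order of occurrence is obtained from the most likely (mean-ascending) order by swapping one pair of neighbours. -/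
open MeasureTheory ProbabilityTheory
open scoped ENNReal NNReal

lemma lintegral_fin_prod : ∀ {n : ℕ} (f : Fin n → ℝ → ℝ≥0∞), (∀ i, Measurable (f i)) →
    ∫⁻ x : Fin n → ℝ, ∏ i, f i (x i) = ∏ i, ∫⁻ y, f i y := by
  intro n
  induction n with
  | zero => intro f _; simp [volume_pi]
  | succ n ih =>
    intro f hf
    calc ∫⁻ x : Fin (n+1) → ℝ, ∏ i, f i (x i)
        = ∫⁻ x : ℝ × (Fin n → ℝ), f 0 x.1 * ∏ i : Fin n, f (Fin.succ i) (x.2 i) := by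
          rw [volume_pi, ← ((measurePreserving_piFinSuccAbove
            (fun _ : Fin (n+1) => (volume : Measure ℝ)) 0).symm).lintegral_comp_emb
            (MeasurableEquiv.measurableEmbedding _)]
          congr 1
          ext x
          rw [Fin.prod_univ_succ]
          simp [MeasurableEquiv.piFinSuccAbove_symm_apply, Fin.zero_succAbove]
      _ = (∫⁻ y, f 0 y) * ∏ i : Fin n, ∫⁻ y, f (Fin.succ i) y := by
          rw [← ih (fun i => f (Fin.succ i)) (fun i => hf _)]
          rw [show (volume : Measure (ℝ × (Fin n → ℝ))) = (volume : Measure ℝ).prod volume from rfl]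
          exact lintegral_prod_mul (hf 0).aemeasurable
            ((Finset.measurable_prod Finset.univ fun i _ =>
              (hf (Fin.succ i)).comp (measurable_pi_apply i))).aemeasurable
      _ = ∏ i, ∫⁻ y, f i y := by rw [Fin.prod_univ_succ]

lemma pi_gauss {n : ℕ} (μ : Fin n → ℝ) (v : ℝ≥0) (hv : v ≠ 0) :
    Measure.pi (fun i => gaussianReal (μ i) v)
      = (volume : Measure (Fin n → ℝ)).withDensity
          (fun x => ∏ i, gaussianPDF (μ i) v (x i)) := by
  refine Measure.pi_eq fun s hs => ?_
  rw [withDensity_apply _ (MeasurableSet.univ_pi hs),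
    ← lintegral_indicator (MeasurableSet.univ_pi hs)]
  have h1 : ∀ x : Fin n → ℝ,
      (Set.univ.pi s).indicator (fun x => ∏ i, gaussianPDF (μ i) v (x i)) x
        = ∏ i, (s i).indicator (gaussianPDF (μ i) v) (x i) := by
    intro x
    by_cases hx : x ∈ Set.univ.pi s
    · rw [Set.indicator_of_mem hx]
      exact Finset.prod_congr rfl fun i _ =>
        (Set.indicator_of_mem (hx i (Set.mem_univ i)) _).symm
    · rw [Set.indicator_of_notMem hx]
      rw [Set.mem_univ_pi] at hx
      push_neg at hx
      obtain ⟨i, hi⟩ := hx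
      exact (Finset.prod_eq_zero (Finset.mem_univ i)
        (by rw [Set.indicator_of_notMem hi])).symm
  simp_rw [h1]
  rw [lintegral_fin_prod _ (fun i => (measurable_gaussianPDF (μ i) v).indicator (hs i))]
  refine Finset.prod_congr rfl fun i _ => ?_
  rw [lintegral_indicator (hs i) _, gaussianReal_of_var_ne_zero _ hv,
    withDensity_apply _ (hs i)]

lemma pdf_pair_swap {m1 m2 u w : ℝ} (v : ℝ≥0) (hv : v ≠ 0) (hm : m2 ≤ m1) (huw : u ≤ w) :
    gaussianPDF m1 v u * gaussianPDF m2 v w ≤ gaussianPDF m1 v w * gaussianPDF m2 v u := by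
  have hvpos : (0:ℝ) < (v:ℝ) := by positivity
  simp only [gaussianPDF]
  rw [← ENNReal.ofReal_mul (gaussianPDFReal_nonneg _ _ _),
    ← ENNReal.ofReal_mul (gaussianPDFReal_nonneg _ _ _)]
  refine ENNReal.ofReal_le_ofReal ?_
  simp only [gaussianPDFReal]
  have hc : (0:ℝ) ≤ (Real.sqrt (2 * Real.pi * v))⁻¹ := by positivity
  calc (Real.sqrt (2 * Real.pi * v))⁻¹ * Real.exp (-(u - m1)^2 / (2*v)) * ((Real.sqrt (2 * Real.pi * v))⁻¹ * Real.exp (-(w - m2)^2 / (2*v)))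
      = (Real.sqrt (2 * Real.pi * v))⁻¹ * (Real.sqrt (2 * Real.pi * v))⁻¹ * Real.exp ((-(u - m1)^2 + -(w - m2)^2) / (2*v)) := by
        rw [add_div, Real.exp_add]; ring
    _ ≤ (Real.sqrt (2 * Real.pi * v))⁻¹ * (Real.sqrt (2 * Real.pi * v))⁻¹ * Real.exp ((-(w - m1)^2 + -(u - m2)^2) / (2*v)) := by
        refine mul_le_mul_of_nonneg_left ?_ (by positivity)
        refine Real.exp_le_exp.2 ?_
        refine div_le_div_of_nonneg_right ?_ (by positivity) |>.trans_eq rfl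
        nlinarith [mul_nonneg (sub_nonneg.2 huw) (sub_nonneg.2 hm)]
    _ = (Real.sqrt (2 * Real.pi * v))⁻¹ * Real.exp (-(w - m1)^2 / (2*v)) * ((Real.sqrt (2 * Real.pi * v))⁻¹ * Real.exp (-(u - m2)^2 / (2*v))) := by
        rw [add_div, Real.exp_add]; ring

def Rset (n : ℕ) (τ : Equiv.Perm (Fin n)) : Set (Fin n → ℝ) :=
  {x | StrictMono fun i => x (τ i)}

lemma measurableSet_Rset (n : ℕ) (τ : Equiv.Perm (Fin n)) : MeasurableSet (Rset n τ) := by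
  have : Rset n τ = ⋂ (i : Fin n) (j : Fin n) (_ : i < j), {x : Fin n → ℝ | x (τ i) < x (τ j)} := by
    ext x
    simp only [Rset, Set.mem_setOf_eq, Set.mem_iInter]
    exact ⟨fun h i j hij => h hij, fun h i j hij => h i j hij⟩
  rw [this]
  refine MeasurableSet.iInter fun i => MeasurableSet.iInter fun j => MeasurableSet.iInter fun _ => ?_
  exact measurableSet_lt (measurable_pi_apply _) (measurable_pi_apply _)

lemma prod_swap_le {n : ℕ} {h1 h2 : Fin n → ℝ≥0∞} {a b : Fin n} (hab : a ≠ b)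
    (hpair : h1 a * h1 b ≤ h2 a * h2 b) (hrest : ∀ i, i ≠ a → i ≠ b → h1 i = h2 i) :
    ∏ i, h1 i ≤ ∏ i, h2 i := by
  have hmem : b ∈ Finset.univ.erase a := Finset.mem_erase.2 ⟨fun h => hab h.symm, Finset.mem_univ b⟩
  rw [← Finset.mul_prod_erase Finset.univ h1 (Finset.mem_univ a),
    ← Finset.mul_prod_erase _ h1 hmem,
    ← Finset.mul_prod_erase Finset.univ h2 (Finset.mem_univ a),
    ← Finset.mul_prod_erase _ h2 hmem, ← mul_assoc, ← mul_assoc]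
  refine mul_le_mul' hpair (le_of_eq (Finset.prod_congr rfl fun i hi => ?_))
  simp only [Finset.mem_erase] at hi
  exact hrest i hi.2.1 hi.1

lemma swap_step {n : ℕ} (μ : Fin n → ℝ) (v : ℝ≥0) (hv : v ≠ 0) (τ : Equiv.Perm (Fin n))
    (a b : Fin n) (hba : b < a) (hμab : μ b ≤ μ a)
    (hless : Rset n τ ⊆ {x | x a < x b}) :
    Measure.pi (fun i => gaussianReal (μ i) v) (Rset n τ)
      ≤ Measure.pi (fun i => gaussianReal (μ i) v) (Rset n (Equiv.swap a b * τ)) := by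
  classical
  set g : (Fin n → ℝ) → ℝ≥0∞ := fun x => ∏ i, gaussianPDF (μ i) v (x i) with hg_def
  have hg : Measurable g :=
    Finset.measurable_prod _ fun i _ =>
      (measurable_gaussianPDF (μ i) v).comp (measurable_pi_apply i)
  set e : Equiv.Perm (Fin n) := Equiv.swap a b with he_def
  set T : (Fin n → ℝ) ≃ᵐ (Fin n → ℝ) := MeasurableEquiv.piCongrLeft (fun _ => ℝ) e with hT_def
  have hT : ∀ (x : Fin n → ℝ) (j : Fin n), T x j = x (e j) := by
    intro x j
    have h1 : T x (e (e j)) = x (e j) :=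
      Equiv.piCongrLeft_apply_apply (fun _ : Fin n => ℝ) e x (e j)
    rwa [Equiv.swap_apply_self] at h1
  have hmp : MeasurePreserving T volume volume := by
    have := measurePreserving_piCongrLeft (fun _ : Fin n => (volume : Measure ℝ)) e
    simpa [volume_pi] using this
  have hpre : T ⁻¹' (Rset n (e * τ)) = Rset n τ := by
    ext x
    simp only [Set.mem_preimage, Rset, Set.mem_setOf_eq]
    rw [show (fun i => T x ((e * τ) i)) = fun i => x (τ i) from
      funext fun i => by rw [Equiv.Perm.mul_apply, hT, Equiv.swap_apply_self]]
  have hab : a ≠ b := ne_of_gt hba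
  rw [pi_gauss μ v hv, withDensity_apply _ (measurableSet_Rset n τ),
    withDensity_apply _ (measurableSet_Rset n (e * τ))]
  calc ∫⁻ x in Rset n τ, g x ∂volume
      ≤ ∫⁻ x in Rset n τ, g (T x) ∂volume := by
        refine setLIntegral_mono (hg.comp T.measurable) fun x hx => ?_
        have hxab : x a < x b := hless hx
        refine prod_swap_le hab ?_ ?_
        · rw [hT, hT, Equiv.swap_apply_left, Equiv.swap_apply_right]
          exact pdf_pair_swap v hv hμab hxab.le
        · intro i hia hib
          rw [hT, Equiv.swap_apply_of_ne_of_ne hia hib]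
    _ = ∫⁻ y in Rset n (e * τ), g y ∂volume := by
        rw [← hpre]
        exact hmp.setLIntegral_comp_preimage_emb T.measurableEmbedding g _

def invCount {n : ℕ} (τ : Equiv.Perm (Fin n)) : ℕ :=
  ((Finset.univ : Finset (Fin n × Fin n)).filter
    (fun p => p.1 < p.2 ∧ τ p.2 < τ p.1)).card

lemma exists_descent {n : ℕ} (τ : Equiv.Perm (Fin n)) (hτ : τ ≠ 1) :
    ∃ (k : ℕ) (hk : k + 1 < n), τ ⟨k + 1, hk⟩ < τ ⟨k, Nat.lt_of_succ_lt hk⟩ := by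
  by_contra h
  push_neg at h
  apply hτ
  haveI : WellFoundedLT (Fin n) := inferInstance
  have hmono : StrictMono τ := by
    cases n with
    | zero => exact fun i => absurd i.2 (by omega)
    | succ m =>
      refine Fin.strictMono_iff_lt_succ.2 fun i => ?_
      have hk : (i : ℕ) + 1 < m + 1 := by omega
      have hle := h i hk
      have hcast : (⟨(i : ℕ), Nat.lt_of_succ_lt hk⟩ : Fin (m+1)) = Fin.castSucc i := by
        ext; simp
      have hsucc : (⟨(i : ℕ) + 1, hk⟩ : Fin (m+1)) = Fin.succ i := by
        ext; simp
      rw [hcast, hsucc] at hle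
      refine lt_of_le_of_ne hle (τ.injective.ne ?_)
      intro hEq
      have h2 := congrArg Fin.val hEq
      simp [Fin.castSucc] at h2
  have h1 : ∀ i, i ≤ τ i := fun i => StrictMono.le_apply hmono
  have hmono' : StrictMono (⇑τ.symm) := fun i j hij => by
    rcases lt_trichotomy (τ.symm i) (τ.symm j) with hh | hh | hh
    · exact hh
    · exact absurd (by rw [← τ.apply_symm_apply i, ← τ.apply_symm_apply j, hh]) hij.ne
    · exact absurd (by simpa using hmono hh) (not_lt.2 hij.le)
  have h2 : ∀ i, i ≤ τ.symm i := fun i => StrictMono.le_apply hmono'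
  ext i
  have hle : τ i ≤ i := by
    have := h2 (τ i)
    rwa [Equiv.symm_apply_apply] at this
  have : τ i = i := le_antisymm hle (h1 i)
  simp [this]

lemma swap_adj_lt {n k : ℕ} (hk : k + 1 < n) {i j : Fin n} (hij : i < j)
    (hne : ¬(i = ⟨k, Nat.lt_of_succ_lt hk⟩ ∧ j = ⟨k+1, hk⟩)) :
    Equiv.swap (⟨k, Nat.lt_of_succ_lt hk⟩ : Fin n) ⟨k+1, hk⟩ i
      < Equiv.swap (⟨k, Nat.lt_of_succ_lt hk⟩ : Fin n) ⟨k+1, hk⟩ j := by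
  rcases i with ⟨iv, hiv⟩
  rcases j with ⟨jv, hjv⟩
  simp only [Equiv.swap_apply_def]
  split_ifs <;>
    (simp only [Fin.lt_def, Fin.mk.injEq, not_and] at *) <;> omega

lemma invCount_lt {n k : ℕ} (τ : Equiv.Perm (Fin n)) (hk : k + 1 < n)
    (hd : τ ⟨k+1, hk⟩ < τ ⟨k, Nat.lt_of_succ_lt hk⟩) :
    invCount (Equiv.swap (τ ⟨k, Nat.lt_of_succ_lt hk⟩) (τ ⟨k+1, hk⟩) * τ) < invCount τ := by
  classical
  set jc : Fin n := ⟨k, Nat.lt_of_succ_lt hk⟩ with hjc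
  set js : Fin n := ⟨k+1, hk⟩ with hjs
  set s : Equiv.Perm (Fin n) := Equiv.swap jc js with hs
  set τ' : Equiv.Perm (Fin n) := Equiv.swap (τ jc) (τ js) * τ with hτ'
  have hcomp : ∀ i, τ' i = τ (s i) := by
    intro i
    rcases eq_or_ne i jc with rfl | hi1
    · simp [hτ', hs, Equiv.Perm.mul_apply, Equiv.swap_apply_left]
    rcases eq_or_ne i js with rfl | hi2
    · simp [hτ', hs, Equiv.Perm.mul_apply, Equiv.swap_apply_right]
    · simp [hτ', hs, Equiv.Perm.mul_apply, Equiv.swap_apply_of_ne_of_ne hi1 hi2,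
        Equiv.swap_apply_of_ne_of_ne (τ.injective.ne hi1) (τ.injective.ne hi2)]
  set A' := (Finset.univ : Finset (Fin n × Fin n)).filter
    (fun p => p.1 < p.2 ∧ τ' p.2 < τ' p.1) with hA'
  set A := (Finset.univ : Finset (Fin n × Fin n)).filter
    (fun p => p.1 < p.2 ∧ τ p.2 < τ p.1) with hA
  have hF : Function.Injective (fun p : Fin n × Fin n => (s p.1, s p.2)) := by
    intro p q hpq
    have h1 := congrArg Prod.fst hpq
    have h2 := congrArg Prod.snd hpq
    exact Prod.ext (s.injective h1) (s.injective h2)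
  have himg : A'.image (fun p : Fin n × Fin n => (s p.1, s p.2)) ⊆ A := by
    intro q hq
    rw [Finset.mem_image] at hq
    obtain ⟨p, hp, rfl⟩ := hq
    rw [Finset.mem_filter] at hp ⊢
    obtain ⟨-, hp1, hp2⟩ := hp
    refine ⟨Finset.mem_univ _, ?_, ?_⟩
    · refine swap_adj_lt hk hp1 ?_
      rintro ⟨hq1, hq2⟩
      rw [hcomp, hcomp, hq1, hq2] at hp2
      simp only [hs, Equiv.swap_apply_left, Equiv.swap_apply_right] at hp2
      change τ (Equiv.swap jc js js) < τ (Equiv.swap jc js jc) at hp2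
      rw [Equiv.swap_apply_left, Equiv.swap_apply_right] at hp2
      exact absurd hd (not_lt.2 hp2.le)
    · rw [hcomp, hcomp] at hp2
      exact hp2
  have hmem : (jc, js) ∈ A := by
    rw [Finset.mem_filter]
    exact ⟨Finset.mem_univ _, by simp [hjc, hjs, Fin.lt_def], hd⟩
  have hnotmem : (jc, js) ∉ A'.image (fun p : Fin n × Fin n => (s p.1, s p.2)) := by
    rw [Finset.mem_image]
    rintro ⟨p, hp, hpq⟩
    have h1 : s p.1 = jc := congrArg Prod.fst hpq
    have h2 : s p.2 = js := congrArg Prod.snd hpq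
    have hp1 : p.1 = js := by
      have := congrArg s h1
      rwa [Equiv.swap_apply_self, hs, Equiv.swap_apply_left] at this
    have hp2 : p.2 = jc := by
      have := congrArg s h2
      rwa [Equiv.swap_apply_self, hs, Equiv.swap_apply_right] at this
    rw [Finset.mem_filter] at hp
    have := hp.2.1
    rw [hp1, hp2] at this
    simp [Fin.lt_def, hjc, hjs] at this
  have hss : A'.image (fun p : Fin n × Fin n => (s p.1, s p.2)) ⊂ A :=
    Finset.ssubset_iff_of_subset himg |>.2 ⟨(jc, js), hmem, hnotmem⟩
  calc invCount τ' = (A'.image (fun p : Fin n × Fin n => (s p.1, s p.2))).card :=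
        (Finset.card_image_of_injective _ hF).symm
    _ < A.card := Finset.card_lt_card hss
    _ = invCount τ := rfl

lemma main_ind {n : ℕ} (μ : Fin n → ℝ) (v : ℝ≥0) (hv : v ≠ 0) (hμ : StrictMono μ) :
    ∀ (N : ℕ) (τ : Equiv.Perm (Fin n)), invCount τ ≤ N → τ ≠ 1 →
      ∃ (k : ℕ) (hk : k + 1 < n),
        Measure.pi (fun i => gaussianReal (μ i) v) (Rset n τ)
          ≤ Measure.pi (fun i => gaussianReal (μ i) v)
              (Rset n (Equiv.swap (⟨k, Nat.lt_of_succ_lt hk⟩ : Fin n) ⟨k + 1, hk⟩)) := by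
  intro N
  induction N with
  | zero =>
    intro τ hN hτ
    obtain ⟨k0, hk0, hd⟩ := exists_descent τ hτ
    exact absurd (Nat.lt_of_lt_of_le (invCount_lt τ hk0 hd) hN) (Nat.not_lt_zero _)
  | succ N ih =>
    intro τ hN hτ
    obtain ⟨k0, hk0, hd⟩ := exists_descent τ hτ
    set jc : Fin n := ⟨k0, Nat.lt_of_succ_lt hk0⟩ with hjc
    set js : Fin n := ⟨k0 + 1, hk0⟩ with hjs
    have hjcjs : jc < js := by simp [hjc, hjs, Fin.lt_def]
    have hstep : Measure.pi (fun i => gaussianReal (μ i) v) (Rset n τ)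
        ≤ Measure.pi (fun i => gaussianReal (μ i) v)
            (Rset n (Equiv.swap (τ jc) (τ js) * τ)) := by
      refine swap_step μ v hv τ (τ jc) (τ js) hd (hμ hd).le ?_
      intro x hx
      exact hx hjcjs
    by_cases hτ'1 : Equiv.swap (τ jc) (τ js) * τ = 1
    · have hτeq : τ = Equiv.swap (τ jc) (τ js) := by
        have h2 : Equiv.swap (τ jc) (τ js) * (Equiv.swap (τ jc) (τ js) * τ) = τ := by
          ext i
          simp [Equiv.Perm.mul_apply, Equiv.swap_apply_self]
        rw [hτ'1] at h2
        simpa using h2.symm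
      have hja : jc = τ js := by
        have h3 : Equiv.swap (τ jc) (τ js) jc = τ jc := by rw [← hτeq]
        have h4 : Equiv.swap (τ jc) (τ js) (τ js) = τ jc := Equiv.swap_apply_right _ _
        exact (Equiv.swap (τ jc) (τ js)).injective (h3.trans h4.symm)
      have hjb : js = τ jc := by
        have h3 : Equiv.swap (τ jc) (τ js) js = τ js := by rw [← hτeq]
        have h4 : Equiv.swap (τ jc) (τ js) (τ jc) = τ js := Equiv.swap_apply_left _ _
        exact (Equiv.swap (τ jc) (τ js)).injective (h3.trans h4.symm)
      refine ⟨k0, hk0, ?_⟩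
      have : Equiv.swap jc js = τ := by
        rw [hτeq, ← hja, ← hjb]
        exact Equiv.swap_comm jc js
      rw [show (⟨k0, Nat.lt_of_succ_lt hk0⟩ : Fin n) = jc from rfl,
        show (⟨k0 + 1, hk0⟩ : Fin n) = js from rfl, this]
    · have hlt : invCount (Equiv.swap (τ jc) (τ js) * τ) < invCount τ :=
        invCount_lt τ hk0 hd
      obtain ⟨k, hk, hle⟩ := ih (Equiv.swap (τ jc) (τ js) * τ) (by omega) hτ'1
      exact ⟨k, hk, hstep.trans hle⟩

/-- For jointly independent Gaussian random variables `X i ~ N(μ i, σ²)` (`n ≥ 2`) with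
common variance `σ² > 0` and strictly increasing means, among all permutations `π`
different from the identity, the probability `P(X (π 0) < … < X (π (n−1)))` is maximised
by an adjacent transposition: the second most likely order of occurrence is obtained from
the mean-ascending order by swapping one pair of neighbours. -/
theorem second_most_likely_order_is_adjacent_swap
    {Ω : Type*} [MeasurableSpace Ω] (P : Measure Ω) [IsProbabilityMeasure P]
    (n : ℕ) (hn : 2 ≤ n) (X : Fin n → Ω → ℝ) (hX : ∀ i, Measurable (X i))
    (μ : Fin n → ℝ) (σ : ℝ) (hσ : 0 < σ)
    (hXd : ∀ i, Measure.map (X i) P = gaussianReal (μ i) ((σ ^ 2).toNNReal))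
    (hindep : iIndepFun X P)
    (hμ : StrictMono μ) :
    ∃ (k : ℕ) (hk : k + 1 < n),
      ∀ π : Equiv.Perm (Fin n), π ≠ 1 →
        P {ω | StrictMono fun i => X (π i) ω} ≤
          P {ω | StrictMono fun i =>
            X (Equiv.swap (⟨k, Nat.lt_of_succ_lt hk⟩ : Fin n) ⟨k + 1, hk⟩ i) ω} := by
  classical
  set v : ℝ≥0 := (σ ^ 2).toNNReal with hv_def
  have hv : v ≠ 0 := by
    simp only [hv_def, ne_eq, Real.toNNReal_eq_zero, not_le]
    positivity
  set Y : Ω → (Fin n → ℝ) := fun ω i => X i ω with hY_def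
  have hY : Measurable Y := measurable_pi_lambda _ (fun i => hX i)
  have hmap : Measure.map Y P = Measure.pi (fun i => gaussianReal (μ i) v) := by
    symm
    refine Measure.pi_eq fun s hs => ?_
    rw [Measure.map_apply hY (MeasurableSet.univ_pi hs)]
    have hpre : Y ⁻¹' Set.univ.pi s = ⋂ i, X i ⁻¹' s i := by
      ext ω
      simp [Set.mem_univ_pi, hY_def]
    rw [hpre]
    have hin := (iIndepFun_iff_measure_inter_preimage_eq_mul.1 hindep)
      Finset.univ (fun i _ => hs i)
    simp only [Finset.mem_univ, Set.iInter_true] at hin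
    rw [show (⋂ i, X i ⁻¹' s i) = ⋂ i ∈ Finset.univ, X i ⁻¹' s i by simp] at *
    rw [hin]
    refine Finset.prod_congr rfl fun i _ => ?_
    rw [← Measure.map_apply (hX i) (hs i), hXd i]
  have hPR : ∀ τ : Equiv.Perm (Fin n),
      P {ω | StrictMono fun i => X (τ i) ω}
        = Measure.pi (fun i => gaussianReal (μ i) v) (Rset n τ) := by
    intro τ
    rw [← hmap, Measure.map_apply hY (measurableSet_Rset n τ)]
    rfl
  -- choose the best adjacent swap
  set f : ℕ → ℝ≥0∞ := fun k =>
    if hk : k + 1 < n then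
      Measure.pi (fun i => gaussianReal (μ i) v)
        (Rset n (Equiv.swap (⟨k, Nat.lt_of_succ_lt hk⟩ : Fin n) ⟨k + 1, hk⟩))
    else 0 with hf_def
  have hne : (Finset.range (n - 1)).Nonempty := ⟨0, by simp; omega⟩
  obtain ⟨k0, hk0mem, hk0max⟩ := Finset.exists_max_image (Finset.range (n - 1)) f hne
  have hk0 : k0 + 1 < n := by
    have := Finset.mem_range.1 hk0mem
    omega
  refine ⟨k0, hk0, fun π hπ => ?_⟩
  obtain ⟨k, hk, hle⟩ := main_ind μ v hv hμ (invCount π) π le_rfl hπ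
  rw [hPR, hPR]
  refine hle.trans ?_
  have h1 : f k = Measure.pi (fun i => gaussianReal (μ i) v)
      (Rset n (Equiv.swap (⟨k, Nat.lt_of_succ_lt hk⟩ : Fin n) ⟨k + 1, hk⟩)) := by
    rw [hf_def]; simp only [dif_pos hk]
  have h2 : f k0 = Measure.pi (fun i => gaussianReal (μ i) v)
      (Rset n (Equiv.swap (⟨k0, Nat.lt_of_succ_lt hk0⟩ : Fin n) ⟨k0 + 1, hk0⟩)) := by
    rw [hf_def]; simp only [dif_pos hk0]
  rw [← h1, ← h2]
  exact hk0max k (Finset.mem_range.2 (by omega))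
end
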